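/- If Σ_s = Ξ_s ⊗ I_n and Σ_t = Ξ_t ⊗ I_n with Ξ_s, Ξ_t symmetric positive definite c×c matrices, then the Monge map satisfies Σ_s^{-1/2}(Σ_s^{1/2} Σ_t Σ_s^{1/2})^{1/2} Σ_s^{-1/2} = (Ξ_s^{-1/2}(Ξ_s^{1/2} Ξ_t Ξ_s^{1/2})^{1/2} Ξ_s^{-1/2}) ⊗ I_n. -/

import Mathlib

open Matrix Kronecker

/-- The (unique) positive semidefinite square root, extended by `0` to all matrices. -/
noncomputable def sqrtm {m : Type*} [Fintype m] [DecidableEq m]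
    (A : Matrix m m ℝ) : Matrix m m ℝ :=
  open scoped Classical in
  if h : A.PosSemidef then
    h.1.eigenvectorUnitary.1 * diagonal (Real.sqrt ∘ h.1.eigenvalues) *
      (star h.1.eigenvectorUnitary : Matrix m m ℝ)
  else 0

/-- The Monge map `Σs^{-1/2}(Σs^{1/2} Σt Σs^{1/2})^{1/2} Σs^{-1/2}`. -/
noncomputable def monge {m : Type*} [Fintype m] [DecidableEq m]
    (S T : Matrix m m ℝ) : Matrix m m ℝ :=
  (sqrtm S)⁻¹ * sqrtm (sqrtm S * T * sqrtm S) * (sqrtm S)⁻¹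

open scoped MatrixOrder

lemma sqrtm_of_posSemidef {m : Type*} [Fintype m] [DecidableEq m]
    {A : Matrix m m ℝ} (h : A.PosSemidef) : sqrtm A = CFC.sqrt A := by
  rw [sqrtm, dif_pos h, CFC.sqrt_eq_real_sqrt A h.nonneg, cfcₙ_eq_cfc, h.1.cfc_eq,
    IsHermitian.cfc, Unitary.conjStarAlgAut_apply]
  simp [RCLike.ofReal_real_eq_id]

lemma kron_one_conjTranspose {c n : ℕ} (A : Matrix (Fin c) (Fin c) ℝ) :
    (A ⊗ₖ (1 : Matrix (Fin n) (Fin n) ℝ))ᴴ = Aᴴ ⊗ₖ (1 : Matrix (Fin n) (Fin n) ℝ) := by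
  ext ⟨i, j⟩ ⟨k, l⟩
  simp [Matrix.kroneckerMap_apply, Matrix.conjTranspose_apply, Matrix.one_apply, eq_comm]

lemma kron_one_posSemidef {c n : ℕ} {A : Matrix (Fin c) (Fin c) ℝ} (hA : A.PosSemidef) :
    (A ⊗ₖ (1 : Matrix (Fin n) (Fin n) ℝ)).PosSemidef := by
  obtain ⟨C, rfl⟩ : ∃ C : Matrix (Fin c) (Fin c) ℝ, A = Cᴴ * C :=
    ⟨CFC.sqrt A, by rw [(CFC.sqrt_nonneg A).posSemidef.isHermitian.eq,
      CFC.sqrt_mul_sqrt_self A hA.nonneg]⟩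
  have : (Cᴴ * C) ⊗ₖ (1 : Matrix (Fin n) (Fin n) ℝ)
      = (C ⊗ₖ (1 : Matrix (Fin n) (Fin n) ℝ))ᴴ * (C ⊗ₖ (1 : Matrix (Fin n) (Fin n) ℝ)) := by
    rw [kron_one_conjTranspose, ← Matrix.mul_kronecker_mul, mul_one]
  rw [this]
  exact Matrix.posSemidef_conjTranspose_mul_self _

lemma sqrtm_kron_one {c n : ℕ} {A : Matrix (Fin c) (Fin c) ℝ} (hA : A.PosSemidef) :
    sqrtm (A ⊗ₖ (1 : Matrix (Fin n) (Fin n) ℝ)) = sqrtm A ⊗ₖ (1 : Matrix (Fin n) (Fin n) ℝ) := by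
  rw [sqrtm_of_posSemidef hA, sqrtm_of_posSemidef (kron_one_posSemidef hA)]
  refine (CFC.sqrt_eq_iff _ _ (kron_one_posSemidef hA).nonneg
    (kron_one_posSemidef (CFC.sqrt_nonneg A).posSemidef).nonneg).mpr ?_
  rw [← Matrix.mul_kronecker_mul, mul_one, CFC.sqrt_mul_sqrt_self A hA.nonneg]

/-- If `Σs = Ξs ⊗ Iₙ` and `Σt = Ξt ⊗ Iₙ` with `Ξs, Ξt` symmetric positive definite, then
the Monge map factorizes as `(Ξs^{-1/2}(Ξs^{1/2} Ξt Ξs^{1/2})^{1/2} Ξs^{-1/2}) ⊗ Iₙ`. -/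
theorem monge_map_kronecker {c n : ℕ}
    (Xs Xt : Matrix (Fin c) (Fin c) ℝ) (hs : Xs.PosDef) (ht : Xt.PosDef) :
    monge (Xs ⊗ₖ (1 : Matrix (Fin n) (Fin n) ℝ)) (Xt ⊗ₖ (1 : Matrix (Fin n) (Fin n) ℝ))
      = monge Xs Xt ⊗ₖ (1 : Matrix (Fin n) (Fin n) ℝ) := by
  have h1 : sqrtm (Xs ⊗ₖ (1 : Matrix (Fin n) (Fin n) ℝ))
      = sqrtm Xs ⊗ₖ (1 : Matrix (Fin n) (Fin n) ℝ) := sqrtm_kron_one hs.posSemidef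
  have hmid : (sqrtm Xs * Xt * sqrtm Xs).PosSemidef := by
    have := ht.posSemidef.mul_mul_conjTranspose_same (sqrtm Xs)
    rwa [sqrtm_of_posSemidef hs.posSemidef, (CFC.sqrt_nonneg Xs).posSemidef.isHermitian.eq,
      ← sqrtm_of_posSemidef hs.posSemidef] at this
  unfold monge
  rw [h1, ← Matrix.mul_kronecker_mul, ← Matrix.mul_kronecker_mul, mul_one, mul_one,
    sqrtm_kron_one hmid, Matrix.inv_kronecker, inv_one,
    ← Matrix.mul_kronecker_mul, ← Matrix.mul_kronecker_mul, mul_one, mul_one]
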